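/- For each t ∈ {0,1,…,T} and each k ∈ ℕ, the single-warehouse value function W_t(·,k) is convex in the net inventory level x on ℤ: for all x ∈ ℤ, W_t(x+1,k) + W_t(x−1,k) ≥ 2·W_t(x,k). -/

import Mathlib

/-!
Backward induction on `t`, with the invariant that `W_t(·,k)` is discretely convex,
`x ↦ W_t(x,k) + c_v·x` is nondecreasing, and `|W_t(x,k)| ≤ A·(1 + k + |x|)`.
Linear growth, together with the finite means of the negative binomial weights, makes every
series in `G_t` converge. Then `G_t(·,k)` is convex as a nonnegative combination of convex
functions, and monotonicity of `W_{t+1} + c_v·id` gives `G_t(a,k) ≥ E[W_{t+1}(x−Z, k+Z+K)] + c_v·x`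
for `a ≥ x`, so the infima over tails are genuine infima rather than the junk value of an
unbounded `⨅`. Finally, the infimum of a convex function of `ℤ` over the tails `[x, ∞)` is again
convex in `x`.
-/

open Filter

/-- Negative Binomial pmf with real shape `r` and success probability `p`:
`NB(r,p)(z) = Γ(z+r)/(Γ(r)·z!)·p^r·(1−p)^z` for `r > 0`, and `NB(0,p)` is
the point mass at `0`. -/
noncomputable def NB (r p : ℝ) (z : ℕ) : ℝ :=
  if r = 0 then (if z = 0 then (1 : ℝ) else 0)
  else Real.Gamma ((z : ℝ) + r) / (Real.Gamma r * (Nat.factorial z : ℝ)) * p ^ r * (1 - p) ^ z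

/-- `p_t = (β0 + N·t)/(β0 + N·t + 1)`. -/
noncomputable def pt (β0 : ℝ) (N t : ℕ) : ℝ :=
  (β0 + (N : ℝ) * (t : ℝ)) / (β0 + (N : ℝ) * (t : ℝ) + 1)

/-- Expectation `E_{(Z,K)}[f(Z,K)]` with `Z ~ NB(α0+k, p_t)` and
`K ~ NB((N−1)(α0+k), p_t)` independent. -/
noncomputable def EZK (α0 β0 : ℝ) (N t k : ℕ) (f : ℕ → ℕ → ℝ) : ℝ :=
  ∑' z : ℕ, ∑' κ : ℕ,
    NB (α0 + (k : ℝ)) (pt β0 N t) z * NB (((N : ℝ) - 1) * (α0 + (k : ℝ))) (pt β0 N t) κ * f z κ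

/-- One-period cost plus cost-to-go of ordering up to level `a` at stage `(t,k)`. -/
noncomputable def G (α0 β0 : ℝ) (N : ℕ) (cv ch cb : ℝ) (W : ℕ → ℤ → ℕ → ℝ)
    (t : ℕ) (a : ℤ) (k : ℕ) : ℝ :=
  cv * (a : ℝ)
    + ch * ∑' z : ℕ, NB (α0 + (k : ℝ)) (pt β0 N t) z * max ((a : ℝ) - (z : ℝ)) 0
    + cb * ∑' z : ℕ, NB (α0 + (k : ℝ)) (pt β0 N t) z * max ((z : ℝ) - (a : ℝ)) 0
    + EZK α0 β0 N t k (fun z κ => W (t + 1) (a - (z : ℤ)) (k + z + κ))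

structure IsPMFWithMean (c : ℕ → ℝ) (μ : ℝ) : Prop where
  nonneg : ∀ z, 0 ≤ c z
  hasSum : HasSum c 1
  hasSum_mul : HasSum (fun z : ℕ => (z : ℝ) * c z) μ

namespace IsPMFWithMean

variable {c : ℕ → ℝ} {μ : ℝ} {f g h : ℕ → ℝ}

lemma summable_mul (hc : IsPMFWithMean c μ) {P Q : ℝ} (hf : ∀ z, |f z| ≤ P + Q * z) :
    Summable fun z => c z * f z := by
  refine Summable.of_norm_bounded ((hc.hasSum.summable.mul_left P).add
    (hc.hasSum_mul.summable.mul_left Q)) fun z => ?_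
  rw [Real.norm_eq_abs, abs_mul, abs_of_nonneg (hc.nonneg z)]
  nlinarith [mul_le_mul_of_nonneg_left (hf z) (hc.nonneg z)]

lemma abs_tsum_mul_le (hc : IsPMFWithMean c μ) {P Q : ℝ} (hf : ∀ z, |f z| ≤ P + Q * z) :
    |∑' z, c z * f z| ≤ P + Q * μ := by
  have hbound := (hc.hasSum.mul_left P).add (hc.hasSum_mul.mul_left Q)
  rw [mul_one] at hbound
  refine (norm_tsum_le_tsum_norm (hc.summable_mul hf).norm).trans
    (hasSum_le (fun z => ?_) (hc.summable_mul hf).norm.hasSum hbound)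
  rw [Real.norm_eq_abs, abs_mul, abs_of_nonneg (hc.nonneg z)]
  nlinarith [mul_le_mul_of_nonneg_left (hf z) (hc.nonneg z)]

lemma tsum_mul_le_add (hc : IsPMFWithMean c μ) (hf : Summable fun z => c z * f z)
    (hg : Summable fun z => c z * g z) {r : ℝ} (hfg : ∀ z, f z ≤ g z + r) :
    ∑' z, c z * f z ≤ ∑' z, c z * g z + r := by
  have hgr := hg.hasSum.add (hc.hasSum.mul_left r)
  rw [mul_one] at hgr
  exact hasSum_le (fun z => by nlinarith [mul_le_mul_of_nonneg_left (hfg z) (hc.nonneg z)])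
    hf.hasSum hgr

lemma two_mul_tsum_mul_le (hc : IsPMFWithMean c μ) (hf : Summable fun z => c z * f z)
    (hg : Summable fun z => c z * g z) (hh : Summable fun z => c z * h z)
    (hfgh : ∀ z, 2 * f z ≤ g z + h z) :
    2 * ∑' z, c z * f z ≤ ∑' z, c z * g z + ∑' z, c z * h z := by
  rw [← tsum_mul_left, ← hg.tsum_add hh]
  exact (hf.mul_left 2).tsum_le_tsum
    (fun z => by nlinarith [mul_le_mul_of_nonneg_left (hfgh z) (hc.nonneg z)]) (hg.add hh)

lemma mean_nonneg (hc : IsPMFWithMean c μ) : 0 ≤ μ :=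
  hc.hasSum_mul.nonneg fun z => mul_nonneg z.cast_nonneg (hc.nonneg z)

lemma monotone_tsum_mul_add {s : ℝ} (hc : IsPMFWithMean c μ)
    {F : ℤ → ℕ → ℝ} (hsum : ∀ a, Summable fun z => c z * F a z)
    (hF : ∀ z, Monotone fun a => F a z + s * a) :
    Monotone fun a => ∑' z, c z * F a z + s * a := fun x a hxa => by
  have := hc.tsum_mul_le_add (hsum x) (hsum a) (r := s * (a - x)) fun z => by
    linarith [hF z hxa]
  linarith

end IsPMFWithMean

section NegativeBinomial

variable {r p : ℝ}

lemma Real.Gamma_natCast_add (hr : 0 < r) (n : ℕ) :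
    Real.Gamma (n + r) = (ascPochhammer ℝ n).eval r * Real.Gamma r := by
  induction n with
  | zero => simp
  | succ n ih =>
    rw [Nat.cast_succ, add_right_comm, Real.Gamma_add_one (by positivity), ih,
      ascPochhammer_succ_eval]
    ring

lemma Real.Gamma_natCast_add_div_eq_choose (hr : 0 < r) (n : ℕ) :
    Real.Gamma (n + r) / (Real.Gamma r * n.factorial) = Ring.choose (r + n - 1) n := by
  have hfac : (n.factorial : ℝ) ≠ 0 := by positivity
  rw [← Ring.multichoose_eq, Real.Gamma_natCast_add hr,
    ← Polynomial.ascPochhammer_smeval_eq_eval, ← Ring.factorial_nsmul_multichoose_eq_ascPochhammer,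
    nsmul_eq_mul]
  field_simp [(Real.Gamma_pos_of_pos hr).ne']

lemma hasSum_Gamma_mul_pow {q : ℝ} (hr : 0 < r) (hq0 : 0 ≤ q) (hq1 : q < 1) :
    HasSum (fun z : ℕ => Real.Gamma (z + r) / (Real.Gamma r * z.factorial) * q ^ z)
      (1 / (1 - q) ^ r) := by
  have hq : q ∈ Metric.eball (0 : ℝ) 1 := by
    rw [Metric.mem_eball, edist_zero_right, enorm_eq_nnnorm, ENNReal.coe_lt_one_iff,
      ← NNReal.coe_lt_one, coe_nnnorm, Real.norm_of_nonneg hq0]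
    exact hq1
  have := (Real.one_div_one_sub_rpow_hasFPowerSeriesOnBall_zero r).hasSum hq
  simp only [FormalMultilinearSeries.ofScalars_apply_eq, zero_add, smul_eq_mul] at this
  simpa only [Real.Gamma_natCast_add_div_eq_choose hr] using this

lemma NB_nonneg (hr : 0 ≤ r) (hp0 : 0 < p) (hp1 : p < 1) (z : ℕ) : 0 ≤ NB r p z := by
  unfold NB
  split_ifs with h
  · exact zero_le_one
  · exact le_rfl
  · have := Real.Gamma_pos_of_pos (lt_of_le_of_ne hr (Ne.symm h))
    have := Real.Gamma_pos_of_pos (by positivity : (0 : ℝ) < z + r)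
    have := Real.rpow_pos_of_pos hp0 r
    have : 0 ≤ 1 - p := by linarith
    positivity

lemma hasSum_NB (hr : 0 ≤ r) (hp0 : 0 < p) (hp1 : p < 1) : HasSum (NB r p) 1 := by
  rcases hr.eq_or_lt with rfl | hr
  · convert hasSum_ite_eq 0 (1 : ℝ) with z
    simp [NB]
  have hsum := (hasSum_Gamma_mul_pow hr (by linarith : 0 ≤ 1 - p) (by linarith)).mul_left (p ^ r)
  rw [sub_sub_cancel, mul_one_div_cancel (Real.rpow_pos_of_pos hp0 r).ne'] at hsum
  refine hsum.congr_fun fun z => ?_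
  simp only [NB, hr.ne', if_false]
  ring

lemma succ_mul_NB_succ (hr : 0 < r) (hp0 : 0 < p) (z : ℕ) :
    ((z + 1 : ℕ) : ℝ) * NB r p (z + 1) = r * (1 - p) / p * NB (r + 1) p z := by
  simp only [NB, hr.ne', (by linarith : r + 1 ≠ 0), if_false]
  rw [Nat.factorial_succ, Real.rpow_add hp0, Real.rpow_one, Real.Gamma_add_one hr.ne',
    show ((z + 1 : ℕ) : ℝ) + r = z + (r + 1) by push_cast; ring]
  have := (Real.Gamma_pos_of_pos hr).ne'
  have := (Real.rpow_pos_of_pos hp0 r).ne'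
  push_cast
  field_simp
  ring

lemma hasSum_mul_NB (hr : 0 ≤ r) (hp0 : 0 < p) (hp1 : p < 1) :
    HasSum (fun z : ℕ => (z : ℝ) * NB r p z) (r * (1 - p) / p) := by
  rcases hr.eq_or_lt with rfl | hr
  · rw [zero_mul, zero_div]
    convert hasSum_zero with z
    rcases z with _ | z <;> simp [NB]
  rw [← hasSum_nat_add_iff' 1]
  simpa only [Finset.range_one, Finset.sum_singleton, Nat.cast_zero, zero_mul, sub_zero,
    succ_mul_NB_succ hr hp0, mul_one] using
    (hasSum_NB (by linarith : 0 ≤ r + 1) hp0 hp1).mul_left (r * (1 - p) / p)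

lemma isPMFWithMean_NB (hr : 0 ≤ r) (hp0 : 0 < p) (hp1 : p < 1) :
    IsPMFWithMean (NB r p) (r * (1 - p) / p) :=
  ⟨NB_nonneg hr hp0 hp1, hasSum_NB hr hp0 hp1, hasSum_mul_NB hr hp0 hp1⟩

lemma mean_NB_add_mean_NB_le {α0 : ℝ} (hα0 : 0 ≤ α0) (hp0 : 0 < p) (hp1 : p < 1) (N k : ℕ) :
    (α0 + k) * (1 - p) / p + (N - 1) * (α0 + k) * (1 - p) / p
      ≤ N * (α0 + 1) * ((1 - p) / p) * (1 + k) := by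
  have hk : (0 : ℝ) ≤ k := k.cast_nonneg
  rw [mul_div_assoc, mul_div_assoc, ← add_mul, mul_right_comm _ _ (1 + (k : ℝ))]
  refine mul_le_mul_of_nonneg_right ?_ (div_nonneg (by linarith) hp0.le)
  nlinarith [mul_nonneg (mul_nonneg (N.cast_nonneg : (0 : ℝ) ≤ N) hα0) hk]

end NegativeBinomial

def IntConvex (f : ℤ → ℝ) : Prop :=
  ∀ x, 2 * f x ≤ f (x + 1) + f (x - 1)

namespace IntConvex

variable {f g : ℤ → ℝ}

lemma add (hf : IntConvex f) (hg : IntConvex g) : IntConvex (f + g) := fun x => by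
  simp only [Pi.add_apply]
  linarith [hf x, hg x]

lemma const_mul (hf : IntConvex f) {r : ℝ} (hr : 0 ≤ r) : IntConvex fun x => r * f x := fun x => by
  nlinarith [mul_le_mul_of_nonneg_left (hf x) hr]

lemma add_linear (hf : IntConvex f) (s : ℝ) : IntConvex fun x => f x + s * x := fun x => by
  push_cast
  linarith [hf x]

lemma comp_sub (hf : IntConvex f) (z : ℤ) : IntConvex fun x => f (x - z) := fun x => by
  simpa only [sub_right_comm _ z 1, add_sub_right_comm _ 1 z] using hf (x - z)

lemma sub_le_sub (hf : IntConvex f) {x a : ℤ} (h : x ≤ a) : f x - f (x - 1) ≤ f a - f (a - 1) := by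
  induction a, h using Int.leInduction with
  | base => exact le_rfl
  | succ a _ ih =>
    have := hf a
    rw [add_sub_cancel_right]
    linarith

lemma tsum_mul {c : ℕ → ℝ} {μ : ℝ} (hc : IsPMFWithMean c μ) {F : ℤ → ℕ → ℝ}
    (hsum : ∀ a, Summable fun z => c z * F a z) (hF : ∀ z, IntConvex (F · z)) :
    IntConvex fun a => ∑' z, c z * F a z := fun a =>
  hc.two_mul_tsum_mul_le (hsum a) (hsum (a + 1)) (hsum (a - 1)) fun z => hF z a

end IntConvex

lemma two_mul_max_zero_le (y : ℝ) : 2 * max y 0 ≤ max (y + 1) 0 + max (y - 1) 0 := by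
  rcases le_total y 0 with h | h <;> simp only [max_eq_left h, max_eq_right h] <;>
    linarith [le_max_left (y + 1) 0, le_max_right (y + 1) 0, le_max_left (y - 1) 0,
      le_max_right (y - 1) 0]

lemma intConvex_max_sub_const_zero (u : ℝ) : IntConvex fun a : ℤ => max ((a : ℝ) - u) 0 :=
  fun a => by convert two_mul_max_zero_le ((a : ℝ) - u) using 3 <;> push_cast <;> ring

lemma intConvex_max_const_sub_zero (u : ℝ) : IntConvex fun a : ℤ => max (u - a) 0 :=
  fun a => by
    rw [add_comm (max _ _)]
    convert two_mul_max_zero_le (u - a) using 3 <;> push_cast <;> ring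

instance (x : ℤ) : Nonempty {a : ℤ // x ≤ a} := ⟨⟨x, le_rfl⟩⟩

noncomputable def tailInf (f : ℤ → ℝ) (x : ℤ) : ℝ := ⨅ a : {a : ℤ // x ≤ a}, f a

section TailInf

variable {f : ℤ → ℝ}

lemma tailInf_le (hf : ∀ x : ℤ, BddBelow (Set.range fun a : {a : ℤ // x ≤ a} => f a))
    {x a : ℤ} (h : x ≤ a) : tailInf f x ≤ f a :=
  ciInf_le (hf x) ⟨a, h⟩

lemma le_tailInf {x : ℤ} {m : ℝ} (h : ∀ a, x ≤ a → m ≤ f a) : m ≤ tailInf f x :=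
  le_ciInf fun a => h a a.2

lemma monotone_tailInf (hf : ∀ x : ℤ, BddBelow (Set.range fun a : {a : ℤ // x ≤ a} => f a)) :
    Monotone (tailInf f) := fun _ _ hxy =>
  le_tailInf fun _ hya => tailInf_le hf (hxy.trans hya)

/-- `2 · tailInf f x - tailInf f (x+1)` is below every `f a` with `a ≥ x - 1`: for `a ≥ x` by
monotonicity, and for `a = x - 1` because convexity gives
`f (x-1) + f b ≥ f x + f (b-1) ≥ 2 · tailInf f x` for every `b > x`. -/
lemma intConvex_tailInf (hconv : IntConvex f)
    (hf : ∀ x : ℤ, BddBelow (Set.range fun a : {a : ℤ // x ≤ a} => f a)) :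
    IntConvex (tailInf f) := fun x => by
  have hmono := monotone_tailInf hf (le_add_of_nonneg_right zero_le_one : x ≤ x + 1)
  suffices ∀ a, x - 1 ≤ a → 2 * tailInf f x - tailInf f (x + 1) ≤ f a by
    linarith [le_tailInf this]
  intro a ha
  rcases ha.eq_or_lt with rfl | ha
  · suffices ∀ b, x + 1 ≤ b → 2 * tailInf f x - f (x - 1) ≤ f b by linarith [le_tailInf this]
    intro b hb
    have := hconv.sub_le_sub (by linarith : x ≤ b)
    linarith [tailInf_le hf (le_refl x), tailInf_le hf (by linarith : x ≤ b - 1)]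
  · linarith [tailInf_le hf (by linarith : x ≤ a)]

end TailInf

noncomputable def expectedCostToGo (c d : ℕ → ℝ) (w : ℤ → ℕ → ℝ) (k : ℕ) (a : ℤ) : ℝ :=
  ∑' z, c z * ∑' κ, d κ * w (a - z) (k + z + κ)

noncomputable def stageCost (cv ch cb : ℝ) (c d : ℕ → ℝ) (w : ℤ → ℕ → ℝ) (k : ℕ) (a : ℤ) : ℝ :=
  cv * a + ch * ∑' z, c z * max ((a : ℝ) - z) 0 + cb * ∑' z, c z * max ((z : ℝ) - a) 0
    + expectedCostToGo c d w k a

lemma G_eq_stageCost (α0 β0 : ℝ) (N : ℕ) (cv ch cb : ℝ) (W : ℕ → ℤ → ℕ → ℝ) (t : ℕ) (a : ℤ)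
    (k : ℕ) :
    G α0 β0 N cv ch cb W t a k = stageCost cv ch cb (NB (α0 + k) (pt β0 N t))
      (NB ((N - 1) * (α0 + k)) (pt β0 N t)) (W (t + 1)) k a := by
  simp only [G, EZK, stageCost, expectedCostToGo, ← tsum_mul_left, mul_assoc]

section ExpectedCostToGo

variable {c d : ℕ → ℝ} {μc μd A : ℝ} {w : ℤ → ℕ → ℝ} {k : ℕ}

lemma abs_le_of_growth (hA : 0 ≤ A) (hw : ∀ y k, |w y k| ≤ A * (1 + k + |(y : ℝ)|)) (a : ℤ)
    (z κ : ℕ) : |w (a - z) (k + z + κ)| ≤ A * (1 + k + |(a : ℝ)|) + 2 * A * z + A * κ := by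
  have hy : |(a : ℝ) - z| ≤ |(a : ℝ)| + z := by simpa using abs_sub (a : ℝ) z
  have := hw (a - z) (k + z + κ)
  push_cast at this
  nlinarith [mul_le_mul_of_nonneg_left hy hA]

lemma summable_expectedCostToGo_inner (hd : IsPMFWithMean d μd) (hA : 0 ≤ A)
    (hw : ∀ y k, |w y k| ≤ A * (1 + k + |(y : ℝ)|)) (a : ℤ) (z : ℕ) :
    Summable fun κ => d κ * w (a - z) (k + z + κ) :=
  hd.summable_mul (abs_le_of_growth hA hw a z)

lemma abs_expectedCostToGo_inner_le (hd : IsPMFWithMean d μd) (hA : 0 ≤ A)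
    (hw : ∀ y k, |w y k| ≤ A * (1 + k + |(y : ℝ)|)) (a : ℤ) (z : ℕ) :
    |∑' κ, d κ * w (a - z) (k + z + κ)| ≤ (A * (1 + k + |(a : ℝ)|) + A * μd) + 2 * A * z := by
  linarith [hd.abs_tsum_mul_le (abs_le_of_growth (k := k) hA hw a z)]

lemma summable_expectedCostToGo_outer (hc : IsPMFWithMean c μc) (hd : IsPMFWithMean d μd)
    (hA : 0 ≤ A) (hw : ∀ y k, |w y k| ≤ A * (1 + k + |(y : ℝ)|)) (a : ℤ) :
    Summable fun z => c z * ∑' κ, d κ * w (a - z) (k + z + κ) :=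
  hc.summable_mul (abs_expectedCostToGo_inner_le hd hA hw a)

lemma abs_expectedCostToGo_le (hc : IsPMFWithMean c μc) (hd : IsPMFWithMean d μd)
    (hA : 0 ≤ A) (hw : ∀ y k, |w y k| ≤ A * (1 + k + |(y : ℝ)|)) (a : ℤ) :
    |expectedCostToGo c d w k a| ≤ A * (1 + k + |(a : ℝ)|) + A * μd + 2 * A * μc :=
  hc.abs_tsum_mul_le (abs_expectedCostToGo_inner_le hd hA hw a)

lemma intConvex_expectedCostToGo (hc : IsPMFWithMean c μc) (hd : IsPMFWithMean d μd)
    (hA : 0 ≤ A) (hw : ∀ y k, |w y k| ≤ A * (1 + k + |(y : ℝ)|))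
    (hconv : ∀ k, IntConvex (w · k)) : IntConvex (expectedCostToGo c d w k) :=
  IntConvex.tsum_mul hc (summable_expectedCostToGo_outer hc hd hA hw) fun z =>
    IntConvex.tsum_mul hd (summable_expectedCostToGo_inner hd hA hw · z) fun _ =>
      (hconv _).comp_sub z

lemma monotone_expectedCostToGo_add {s : ℝ} (hc : IsPMFWithMean c μc) (hd : IsPMFWithMean d μd)
    (hA : 0 ≤ A) (hw : ∀ y k, |w y k| ≤ A * (1 + k + |(y : ℝ)|))
    (hmono : ∀ k, Monotone fun x : ℤ => w x k + s * x) :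
    Monotone fun a => expectedCostToGo c d w k a + s * a :=
  hc.monotone_tsum_mul_add (summable_expectedCostToGo_outer hc hd hA hw) fun z =>
    hd.monotone_tsum_mul_add (summable_expectedCostToGo_inner hd hA hw · z) fun κ x a hxa => by
      have := hmono (k + z + κ) (sub_le_sub_right hxa (z : ℤ))
      push_cast at this
      linarith

end ExpectedCostToGo

section StageCost

variable {c d : ℕ → ℝ} {μc μd A cv ch cb : ℝ} {w : ℤ → ℕ → ℝ} {k : ℕ}

-- Stated in the shape `P + Q * z` taken by `IsPMFWithMean.summable_mul`.
lemma abs_max_sub_const_zero_le (a : ℝ) {z : ℝ} (hz : 0 ≤ z) : |max (a - z) 0| ≤ |a| + 0 * z := by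
  rw [abs_of_nonneg (le_max_right _ _), zero_mul, add_zero]
  exact max_le (by linarith [le_abs_self a]) (abs_nonneg a)

lemma abs_max_const_sub_zero_le (a : ℝ) {z : ℝ} (hz : 0 ≤ z) : |max (z - a) 0| ≤ |a| + 1 * z := by
  rw [abs_of_nonneg (le_max_right _ _), one_mul]
  exact max_le (by linarith [neg_abs_le a]) (by positivity)

lemma intConvex_stageCost (hch : 0 ≤ ch) (hcb : 0 ≤ cb) (hc : IsPMFWithMean c μc)
    (hd : IsPMFWithMean d μd) (hA : 0 ≤ A) (hw : ∀ y k, |w y k| ≤ A * (1 + k + |(y : ℝ)|))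
    (hconv : ∀ k, IntConvex (w · k)) : IntConvex (stageCost cv ch cb c d w k) := by
  have hhold := IntConvex.tsum_mul hc
    (fun a => hc.summable_mul fun z => abs_max_sub_const_zero_le (a : ℝ) z.cast_nonneg)
    fun z => intConvex_max_sub_const_zero z
  have hback := IntConvex.tsum_mul hc
    (fun a => hc.summable_mul fun z => abs_max_const_sub_zero_le (a : ℝ) z.cast_nonneg)
    fun z => intConvex_max_const_sub_zero z
  have hlin : IntConvex fun a : ℤ => cv * (a : ℝ) := fun a => by
    push_cast
    linarith
  exact ((hlin.add (hhold.const_mul hch)).add (hback.const_mul hcb)).add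
    (intConvex_expectedCostToGo hc hd hA hw hconv)

/-- Since ordering costs `cv` per unit and `w + cv·id` is nondecreasing, raising the order-up-to
level above `x` can only lower the expected cost-to-go by the extra ordering cost. -/
lemma expectedCostToGo_add_le_stageCost (hch : 0 ≤ ch) (hcb : 0 ≤ cb) (hc : IsPMFWithMean c μc)
    (hd : IsPMFWithMean d μd) (hA : 0 ≤ A) (hw : ∀ y k, |w y k| ≤ A * (1 + k + |(y : ℝ)|))
    (hmono : ∀ k, Monotone fun x : ℤ => w x k + cv * x) {x a : ℤ} (hxa : x ≤ a) :
    expectedCostToGo c d w k x + cv * x ≤ stageCost cv ch cb c d w k a := by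
  have hhold : 0 ≤ ∑' z, c z * max ((a : ℝ) - z) 0 :=
    tsum_nonneg fun z => mul_nonneg (hc.nonneg z) (le_max_right _ _)
  have hback : 0 ≤ ∑' z, c z * max ((z : ℝ) - a) 0 :=
    tsum_nonneg fun z => mul_nonneg (hc.nonneg z) (le_max_right _ _)
  have := monotone_expectedCostToGo_add (k := k) hc hd hA hw hmono hxa
  simp only [stageCost]
  nlinarith [mul_nonneg hch hhold, mul_nonneg hcb hback]

lemma stageCost_le (hch : 0 ≤ ch) (hcb : 0 ≤ cb) (hc : IsPMFWithMean c μc) (x : ℤ) :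
    stageCost cv ch cb c d w k x
      ≤ cv * x + (ch + cb) * |(x : ℝ)| + cb * μc + expectedCostToGo c d w k x := by
  have hhold := (le_abs_self _).trans
    (hc.abs_tsum_mul_le fun z => abs_max_sub_const_zero_le (x : ℝ) z.cast_nonneg)
  have hback := (le_abs_self _).trans
    (hc.abs_tsum_mul_le fun z => abs_max_const_sub_zero_le (x : ℝ) z.cast_nonneg)
  simp only [stageCost]
  nlinarith [mul_le_mul_of_nonneg_left hhold hch, mul_le_mul_of_nonneg_left hback hcb]

end StageCost

structure IsRegularValueFn (cv : ℝ) (w : ℤ → ℕ → ℝ) : Prop where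
  intConvex : ∀ k, IntConvex (w · k)
  monotone_add : ∀ k, Monotone fun x : ℤ => w x k + cv * x
  growth : ∃ A, 0 ≤ A ∧ ∀ x k, |w x k| ≤ A * (1 + k + |(x : ℝ)|)

theorem IsRegularValueFn.tailInf_stageCost {cv ch cb M : ℝ} (hch : 0 ≤ ch) (hcb : 0 ≤ cb)
    {c d : ℕ → ℕ → ℝ} {μc μd : ℕ → ℝ} (hc : ∀ k, IsPMFWithMean (c k) (μc k))
    (hd : ∀ k, IsPMFWithMean (d k) (μd k)) (hμ : ∀ k, μc k + μd k ≤ M * (1 + k))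
    {w : ℤ → ℕ → ℝ} (hw : IsRegularValueFn cv w) :
    IsRegularValueFn cv fun x k => tailInf (stageCost cv ch cb (c k) (d k) w k) x - cv * x := by
  obtain ⟨A, hA, hgrowth⟩ := hw.growth
  have hlower : ∀ k {x a : ℤ}, x ≤ a →
      expectedCostToGo (c k) (d k) w k x + cv * x ≤ stageCost cv ch cb (c k) (d k) w k a :=
    fun k _ _ => expectedCostToGo_add_le_stageCost hch hcb (hc k) (hd k) hA hgrowth hw.monotone_add
  have hbdd : ∀ k x, BddBelow (Set.range fun a : {a : ℤ // x ≤ a} =>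
      stageCost cv ch cb (c k) (d k) w k a) :=
    fun k x => ⟨_, Set.forall_mem_range.2 fun a => hlower k a.2⟩
  have hM : 0 ≤ M := by
    have := hμ 0
    push_cast at this
    linarith [(hc 0).mean_nonneg, (hd 0).mean_nonneg]
  refine ⟨fun k => ?_, fun k => by simpa using monotone_tailInf (hbdd k), ?_⟩
  · simpa [sub_eq_add_neg] using (intConvex_tailInf
      (intConvex_stageCost hch hcb (hc k) (hd k) hA hgrowth hw.intConvex) (hbdd k)).add_linear (-cv)
  refine ⟨A + ch + cb + (cb + 2 * A) * M, by positivity, fun x k => ?_⟩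
  have hlo := le_tailInf fun a => hlower k (x := x) (a := a)
  have hup := (tailInf_le (hbdd k) le_rfl).trans
    (stageCost_le (d := d k) (w := w) (cv := cv) hch hcb (hc k) x)
  have hE := abs_le.1 (abs_expectedCostToGo_le (hc k) (hd k) hA hgrowth (k := k) x)
  have hμk := hμ k
  have hμc := (hc k).mean_nonneg
  have hμd := (hd k).mean_nonneg
  have hx := abs_nonneg (x : ℝ)
  have hk : (0 : ℝ) ≤ k := k.cast_nonneg
  rw [abs_le]
  constructor <;> nlinarith [mul_le_mul_of_nonneg_left hμk (by positivity : 0 ≤ cb + 2 * A),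
    mul_nonneg hA hμc, mul_nonneg hA hμd, mul_nonneg hcb hμd, mul_nonneg hM hx,
    mul_nonneg (add_nonneg hch hcb) (add_nonneg zero_le_one hk)]

lemma pt_mem_Ioo {β0 : ℝ} (hβ0 : 0 < β0) (N t : ℕ) : pt β0 N t ∈ Set.Ioo 0 1 := by
  have : 0 < β0 + N * t := by positivity
  exact ⟨by unfold pt; positivity, (div_lt_one (by linarith)).2 (by linarith)⟩

lemma isRegularValueFn_zero {cv : ℝ} (hcv : 0 ≤ cv) : IsRegularValueFn cv fun _ _ => 0 :=
  ⟨fun _ _ => by simp, fun _ => by simpa using Int.cast_mono.const_mul hcv, 0, le_rfl, by simp⟩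

lemma IsRegularValueFn.of_eq_tailInf_G {α0 β0 cv ch cb : ℝ} (hα0 : 0 ≤ α0) (hβ0 : 0 < β0)
    {N : ℕ} (hN : 1 ≤ N) (hch : 0 ≤ ch) (hcb : 0 ≤ cb) {W : ℕ → ℤ → ℕ → ℝ} {t : ℕ}
    (hreg : IsRegularValueFn cv (W (t + 1)))
    (hW : ∀ x k, W t x k = (⨅ a : {a : ℤ // x ≤ a}, G α0 β0 N cv ch cb W t a.1 k) - cv * x) :
    IsRegularValueFn cv (W t) := by
  obtain ⟨hp0, hp1⟩ := pt_mem_Ioo hβ0 N t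
  have hN' : (1 : ℝ) ≤ N := by exact_mod_cast hN
  convert hreg.tailInf_stageCost hch hcb
    (fun k => isPMFWithMean_NB (by positivity : 0 ≤ α0 + k) hp0 hp1)
    (fun k => isPMFWithMean_NB (by nlinarith : 0 ≤ ((N : ℝ) - 1) * (α0 + k)) hp0 hp1)
    (mean_NB_add_mean_NB_le hα0 hp0 hp1 N) using 1
  funext x k
  rw [hW]
  simp only [G_eq_stageCost]
  rfl

theorem value_convex_general
    (α0 β0 : ℝ) (hα0 : 0 < α0) (hβ0 : 0 < β0)
    (N T : ℕ) (hN : 1 ≤ N)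
    (cv ch cb : ℝ) (hcv : 0 ≤ cv) (hch : 0 < ch) (hcb : 0 < cb)
    (W : ℕ → ℤ → ℕ → ℝ)
    (hWT : ∀ x k, W T x k = 0)
    (hW : ∀ t, t < T → ∀ x k,
      W t x k = (⨅ a : {a : ℤ // x ≤ a}, G α0 β0 N cv ch cb W t a.1 k) - cv * (x : ℝ)) :
    ∀ t ≤ T, ∀ (k : ℕ) (x : ℤ), 2 * W t x k ≤ W t (x + 1) k + W t (x - 1) k := by
  have hreg : ∀ t ≤ T, IsRegularValueFn cv (W t) := fun t =>
    Nat.decreasingInduction (motive := fun t _ => IsRegularValueFn cv (W t))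
      (fun t ht hreg => hreg.of_eq_tailInf_G hα0.le hβ0 hN hch.le hcb.le (hW t ht))
      (by simpa only [funext₂ hWT] using isRegularValueFn_zero hcv)
  exact fun t ht k x => (hreg t ht).intConvex k x

/-- The single-warehouse value function `W_t(·,k)` is (discretely) convex in `x`. -/
theorem value_convex
    (α0 β0 : ℝ) (hα0 : 0 < α0) (hβ0 : 0 < β0)
    (N T : ℕ) (hN : 1 ≤ N) (hT : 1 ≤ T)
    (cv ch cb : ℝ) (hcv : 0 ≤ cv) (hch : 0 < ch) (hcb : 0 < cb)
    (W : ℕ → ℤ → ℕ → ℝ)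
    (hWT : ∀ x k, W T x k = 0)
    (hW : ∀ t, t < T → ∀ x k,
      W t x k = (⨅ a : {a : ℤ // x ≤ a}, G α0 β0 N cv ch cb W t a.1 k) - cv * (x : ℝ)) :
    ∀ t ≤ T, ∀ (k : ℕ) (x : ℤ), 2 * W t x k ≤ W t (x + 1) k + W t (x - 1) k :=
  value_convex_general α0 β0 hα0 hβ0 N T hN cv ch cb hcv hch hcb W hWT hW
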